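/- Let n ≥ 3 be an integer, let f ∈ C¹((0,∞)) satisfy lim_{r→+∞} f(r) = +∞, and let h ∈ C¹(ℝ) be positive with lim_{τ→+∞} h'(τ)/h(τ) = 0 and lim_{r→+∞} f'(r)/h(f(r)) = 1. Then ∫₁^∞ e^{−(n−1)f(t)} dt < ∞, and ∫_r^∞ e^{−(n−1)f(t)} dt ∼ e^{−(n−1)f(r)} / ((n−1) h(f(r))) as r → +∞; in particular ∫_r^∞ e^{−(n−1)f(t)} dt → 0 as r → +∞. -/

import Mathlib

open Filter MeasureTheory Set Topology

/-- Auxiliary: if `h > 0` and `h'/h → 0`, then `e^{-cτ}/h(τ) → 0` for `c ≥ 2`. -/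
lemma aux_exp_div_stmt9 (h : ℝ → ℝ) (hh1 : ContDiff ℝ 1 h) (hhpos : ∀ τ : ℝ, 0 < h τ)
    (hi : Tendsto (fun τ => deriv h τ / h τ) atTop (𝓝 0)) (c : ℝ) (hc : 2 ≤ c) :
    Tendsto (fun τ => Real.exp (-c * τ) / h τ) atTop (𝓝 0) := by
  obtain ⟨T, hT⟩ := Metric.tendsto_atTop.mp hi 1 one_pos
  have hT' : ∀ x, T ≤ x → ‖deriv h x / h x‖ ≤ 1 := by
    intro x hx
    have := hT x hx
    rw [Real.dist_eq, sub_zero] at this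
    exact this.le
  have hlog : ∀ τ, T ≤ τ → -(τ - T) ≤ Real.log (h τ) - Real.log (h T) := by
    intro τ hτ
    have hder : ∀ x ∈ Icc T τ, HasDerivWithinAt (fun y => Real.log (h y))
        ((fun y => deriv h y / h y) x) (Icc T τ) x := fun x _ =>
      (((hh1.differentiable one_ne_zero) x).hasDerivAt.log (hhpos x).ne').hasDerivWithinAt
    have key := (convex_Icc T τ).norm_image_sub_le_of_norm_hasDerivWithin_le hder
      (fun x hx => hT' x hx.1) (left_mem_Icc.2 hτ) (right_mem_Icc.2 hτ)
    rw [Real.norm_eq_abs, Real.norm_eq_abs, one_mul,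
      abs_of_nonneg (by linarith : (0:ℝ) ≤ τ - T)] at key
    linarith [(abs_le.1 key).1]
  have heq : ∀ τ : ℝ, Real.exp (-c * τ) / h τ = Real.exp (-c * τ - Real.log (h τ)) := by
    intro τ
    rw [Real.exp_sub, Real.exp_log (hhpos τ)]
  have hzero : Tendsto (fun τ => Real.exp (-((c-1) * τ)) * Real.exp (-T - Real.log (h T)))
      atTop (𝓝 0) := by
    have h1 : Tendsto (fun τ : ℝ => (c-1) * τ) atTop atTop :=
      Tendsto.const_mul_atTop (by linarith) tendsto_id
    have h2 : Tendsto (fun τ : ℝ => Real.exp (-((c-1) * τ))) atTop (𝓝 0) :=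
      Real.tendsto_exp_neg_atTop_nhds_zero.comp h1
    simpa using h2.mul_const (Real.exp (-T - Real.log (h T)))
  apply squeeze_zero' ?_ ?_ hzero
  · filter_upwards with τ using div_nonneg (Real.exp_pos _).le (hhpos τ).le
  · filter_upwards [eventually_ge_atTop T] with τ hτ
    rw [heq, ← Real.exp_add]
    apply Real.exp_le_exp.2
    have := hlog τ hτ
    linarith

/-- asymptotics of the tail integral, step 1 of the proof of Theorem
7.1. Let `n ≥ 3`, `f ∈ C¹((0,∞))` with `f(r) → +∞`, and `h ∈ C¹(ℝ)` positive with
`h'/h → 0` and `f'(r)/h(f(r)) → 1`. Then `∫₁^∞ e^{-(n-1)f(t)} dt < ∞`,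
`∫_r^∞ e^{-(n-1)f(t)} dt ∼ e^{-(n-1)f(r)}/((n-1) h(f(r)))` as `r → +∞`, and in
particular the tail integral tends to `0`. -/
theorem stmt_9
    (n : ℕ) (hn : 3 ≤ n)
    (f : ℝ → ℝ) (hf : ContDiffOn ℝ 1 f (Set.Ioi 0))
    (hftop : Filter.Tendsto f Filter.atTop Filter.atTop)
    (h : ℝ → ℝ) (hh1 : ContDiff ℝ 1 h) (hhpos : ∀ τ : ℝ, 0 < h τ)
    (hi : Filter.Tendsto (fun τ => deriv h τ / h τ) Filter.atTop (nhds 0))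
    (hiii : Filter.Tendsto (fun r => deriv f r / h (f r)) Filter.atTop (nhds 1)) :
    MeasureTheory.IntegrableOn (fun t => Real.exp (-((n : ℝ) - 1) * f t))
      (Set.Ioi 1) ∧
    Filter.Tendsto (fun r =>
        (∫ t in Set.Ioi r, Real.exp (-((n : ℝ) - 1) * f t)) /
          (Real.exp (-((n : ℝ) - 1) * f r) / (((n : ℝ) - 1) * h (f r))))
      Filter.atTop (nhds 1) ∧
    Filter.Tendsto (fun r => ∫ t in Set.Ioi r, Real.exp (-((n : ℝ) - 1) * f t))
      Filter.atTop (nhds 0) := by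
  set c : ℝ := (n : ℝ) - 1 with hc_def
  have hn3 : (3:ℝ) ≤ (n:ℝ) := by exact_mod_cast hn
  have hc2 : (2:ℝ) ≤ c := by rw [hc_def]; linarith
  have hc0 : (0:ℝ) < c := by linarith
  have hhd : Differentiable ℝ h := hh1.differentiable one_ne_zero
  have hfd : ∀ r ∈ Set.Ioi (0:ℝ), HasDerivAt f (deriv f r) r := fun r hr =>
    ((hf.differentiableOn one_ne_zero).differentiableAt (isOpen_Ioi.mem_nhds hr)).hasDerivAt
  set φ : ℝ → ℝ := fun r => (deriv f r / h (f r)) * (1 + deriv h (f r) / (c * h (f r)))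
    with hφ_def
  -- φ → 1
  have hφ1 : Tendsto φ atTop (𝓝 1) := by
    have h2 : Tendsto (fun r => deriv h (f r) / h (f r)) atTop (𝓝 0) := hi.comp hftop
    have h3 : Tendsto (fun r => 1 + deriv h (f r) / (c * h (f r))) atTop (𝓝 (1 + 0 / c)) := by
      apply tendsto_const_nhds.add
      have h4 := h2.div_const c
      apply h4.congr
      intro r
      rw [div_div, mul_comm (h (f r)) c]
    rw [zero_div, add_zero] at h3
    simpa using hiii.mul h3
  set G : ℝ → ℝ := fun r => Real.exp (-c * f r) / (c * h (f r)) with hG_def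
  have hGpos : ∀ r, 0 < G r := fun r => div_pos (Real.exp_pos _) (mul_pos hc0 (hhpos _))
  have hGderiv : ∀ r ∈ Set.Ioi (0:ℝ), HasDerivAt G (-(Real.exp (-c * f r) * φ r)) r := by
    intro r hr
    have hfr := hfd r hr
    have hN : HasDerivAt (fun y => Real.exp (-c * f y))
        (Real.exp (-c * f r) * (-c * deriv f r)) r := (hfr.const_mul (-c)).exp
    have hD : HasDerivAt (fun y => c * h (f y)) (c * (deriv h (f r) * deriv f r)) r :=
      (((hhd (f r)).hasDerivAt.comp r hfr)).const_mul c
    have hD0 : c * h (f r) ≠ 0 := (mul_pos hc0 (hhpos _)).ne'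
    have := hN.div hD hD0
    refine this.congr_deriv ?_
    have hh0 : h (f r) ≠ 0 := (hhpos _).ne'
    rw [hφ_def]
    field_simp
    ring
  -- G → 0
  have hG0 : Tendsto G atTop (𝓝 0) := by
    have haux := aux_exp_div_stmt9 h hh1 hhpos hi c hc2
    have h5 : Tendsto (fun τ => Real.exp (-c * τ) / (c * h τ)) atTop (𝓝 0) := by
      have := haux.div_const c
      rw [zero_div] at this
      apply this.congr
      intro τ
      rw [div_div, mul_comm (h τ) c]
    exact h5.comp hftop
  have hGneg0 : Tendsto (fun y => -G y) atTop (𝓝 0) := by simpa using hG0.neg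
  -- choose R with φ ≥ 1/2 beyond R
  obtain ⟨R₀, hR₀⟩ := (eventually_atTop.mp (hφ1.eventually
    (eventually_ge_nhds (by norm_num : (1:ℝ)/2 < 1))))
  set R : ℝ := max R₀ 1 with hR_def
  have hR1 : (1:ℝ) ≤ R := le_max_right _ _
  have hRφ : ∀ t, R ≤ t → (1:ℝ)/2 ≤ φ t := fun t ht =>
    hR₀ t ((le_max_left _ _).trans ht)
  have key : ∀ r, R ≤ r →
      ∀ x ∈ Set.Ici r, HasDerivAt (fun y => -G y) (Real.exp (-c * f x) * φ x) x := by
    intro r hr x hx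
    have hx0 : x ∈ Set.Ioi (0:ℝ) := by
      have : r ≤ x := hx
      simp only [Set.mem_Ioi]
      linarith
    exact (hGderiv x hx0).neg.congr_deriv (neg_neg _)
  have keyInt : ∀ r, R ≤ r →
      IntegrableOn (fun x => Real.exp (-c * f x) * φ x) (Set.Ioi r) := by
    intro r hr
    refine integrableOn_Ioi_deriv_of_nonneg' (key r hr) (fun x hx => ?_) hGneg0
    have hx' : (1:ℝ)/2 ≤ φ x := hRφ x (hr.trans (le_of_lt hx))
    exact mul_nonneg (Real.exp_pos _).le (by linarith)
  have keyEq : ∀ r, R ≤ r → ∫ x in Set.Ioi r, Real.exp (-c * f x) * φ x = G r := by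
    intro r hr
    have := integral_Ioi_of_hasDerivAt_of_tendsto' (key r hr) (keyInt r hr) hGneg0
    simpa using this
  have hecont : ContinuousOn (fun t => Real.exp (-c * f t)) (Set.Ioi 0) :=
    Real.continuous_exp.comp_continuousOn (continuousOn_const.mul hf.continuousOn)
  have hIoisub : ∀ r : ℝ, R ≤ r → Set.Ioi r ⊆ Set.Ioi (0:ℝ) := by
    intro r hr x hx
    simp only [Set.mem_Ioi] at hx ⊢
    linarith
  have keyIntE : ∀ r, R ≤ r →
      IntegrableOn (fun t => Real.exp (-c * f t)) (Set.Ioi r) := by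
    intro r hr
    have hgInt : IntegrableOn (fun x => 2 * (Real.exp (-c * f x) * φ x)) (Set.Ioi r) :=
      (keyInt r hr).const_mul 2
    refine hgInt.mono' ?_ ?_
    · exact (hecont.mono (hIoisub r hr)).aestronglyMeasurable measurableSet_Ioi
    · filter_upwards [ae_restrict_mem measurableSet_Ioi] with x hx
      have hx' : (1:ℝ)/2 ≤ φ x := hRφ x (hr.trans (le_of_lt hx))
      have he := (Real.exp_pos (-c * f x)).le
      rw [Real.norm_eq_abs, abs_of_nonneg he]
      nlinarith
  -- Part 1: integrability on Ioi 1
  have part1 : IntegrableOn (fun t => Real.exp (-c * f t)) (Set.Ioi 1) := by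
    have hIcc : IntegrableOn (fun t => Real.exp (-c * f t)) (Set.Icc 1 R) := by
      apply ContinuousOn.integrableOn_Icc
      apply hecont.mono
      intro x hx
      simp only [Set.mem_Ioi]
      have := hx.1
      linarith
    have hu : IntegrableOn (fun t => Real.exp (-c * f t)) (Set.Icc 1 R ∪ Set.Ioi R) :=
      hIcc.union (keyIntE R le_rfl)
    apply hu.mono_set
    intro x hx
    simp only [Set.mem_Ioi] at hx
    rcases le_or_gt x R with hxR | hxR
    · exact Or.inl ⟨hx.le, hxR⟩
    · exact Or.inr hxR
  -- tail bounds
  set tail : ℝ → ℝ := fun r => ∫ t in Set.Ioi r, Real.exp (-c * f t) with htail_def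
  have htail_nonneg : ∀ r, 0 ≤ tail r := fun r =>
    setIntegral_nonneg measurableSet_Ioi (fun x _ => (Real.exp_pos _).le)
  -- Part 2: ratio → 1
  have part2 : Tendsto (fun r => tail r / G r) atTop (𝓝 1) := by
    rw [Metric.tendsto_atTop]
    intro ε hε
    set δ : ℝ := min (ε/3) (1/2) with hδ_def
    have hδ0 : 0 < δ := lt_min (by linarith) (by norm_num)
    have hδhalf : δ ≤ 1/2 := min_le_right _ _
    have hδε : δ ≤ ε/3 := min_le_left _ _
    obtain ⟨R₁, hR₁⟩ := eventually_atTop.mp (hφ1.eventually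
      (Metric.closedBall_mem_nhds (1:ℝ) hδ0))
    refine ⟨max R R₁, fun r hr => ?_⟩
    have hrR : R ≤ r := (le_max_left _ _).trans hr
    have hrR₁ : R₁ ≤ r := (le_max_right _ _).trans hr
    have hφbound : ∀ t, r < t → |φ t - 1| ≤ δ := by
      intro t ht
      have := hR₁ t (hrR₁.trans ht.le)
      simpa [Real.dist_eq] using this
    -- (1-δ) tail ≤ G r ≤ (1+δ) tail
    have hintE := keyIntE r hrR
    have hintEφ := keyInt r hrR
    have hupper : G r ≤ (1 + δ) * tail r := by
      have hmono : ∫ x in Set.Ioi r, Real.exp (-c * f x) * φ x ≤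
          ∫ x in Set.Ioi r, (1 + δ) * Real.exp (-c * f x) := by
        apply setIntegral_mono_on hintEφ (hintE.const_mul _) measurableSet_Ioi
        intro x hx
        have hb := hφbound x hx
        have he := (Real.exp_pos (-c * f x)).le
        have := (abs_le.1 hb).2
        nlinarith
      rw [keyEq r hrR] at hmono
      rwa [integral_const_mul] at hmono
    have hlower : (1 - δ) * tail r ≤ G r := by
      have hmono : ∫ x in Set.Ioi r, (1 - δ) * Real.exp (-c * f x) ≤
          ∫ x in Set.Ioi r, Real.exp (-c * f x) * φ x := by
        apply setIntegral_mono_on (hintE.const_mul _) hintEφ measurableSet_Ioi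
        intro x hx
        have hb := hφbound x hx
        have he := (Real.exp_pos (-c * f x)).le
        have := (abs_le.1 hb).1
        nlinarith
      rw [keyEq r hrR] at hmono
      rwa [integral_const_mul] at hmono
    have hg : 0 < G r := hGpos r
    have ht0 : 0 ≤ tail r := htail_nonneg r
    rw [Real.dist_eq]
    have habs : |tail r / G r - 1| ≤ 2 * δ := by
      rw [abs_le, le_sub_iff_add_le, sub_le_iff_le_add]
      constructor
      · rw [le_div_iff₀ hg]
        nlinarith [mul_nonneg ht0 (mul_nonneg hδ0.le hδ0.le)]
      · rw [div_le_iff₀ hg]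
        nlinarith [mul_nonneg ht0 (mul_nonneg hδ0.le hδ0.le)]
    linarith
  -- Part 3: tail → 0
  have part3 : Tendsto tail atTop (𝓝 0) := by
    have := part2.mul hG0
    rw [one_mul] at this
    apply this.congr
    intro r
    exact div_mul_cancel₀ _ (hGpos r).ne'
  exact ⟨part1, part2, part3⟩
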